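/- arXiv:1707.08598 — 2 statements merged into one kernel-verified Lean document; each statement's English description precedes it below -/
import Mathlib

section
/- Fix k ≥ 1 and a profile V over C. If some voter i has a manipulative vote at V with respect to k-approval in favour of a candidate p ∈ C, then p ∈ S(V,k). -/
open scoped Classical

namespace Paper

variable {C I : Type*}

/-- The set of the `k` highest-ranked candidates in the vote `v`. -/
noncomputable def topk [Fintype C] (k : ℕ) (v : LinearOrder C) : Finset C :=
  Finset.univ.filter fun c => (Finset.univ.filter fun d => v.lt c d).card < k

/-- The highest-ranked candidate of the vote `v`. -/
noncomputable def top [Fintype C] [Nonempty C] (v : LinearOrder C) : C :=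
  @Finset.max' C v Finset.univ Finset.univ_nonempty

/-- The `k`-approval score of candidate `c` in the profile `V`. -/
noncomputable def sck [Fintype C] [Fintype I] (k : ℕ) (V : I → LinearOrder C) (c : C) : ℕ :=
  (Finset.univ.filter fun i => c ∈ topk k (V i)).card

/-- The `k`-approval winner of the profile `V` with tie-breaking order `tb`:
the `tb`-greatest candidate among the candidates with maximal `k`-approval score;
equivalently, the unique candidate beating every other candidate. -/
noncomputable def winner [Fintype C] [Nonempty C] [Fintype I] (k : ℕ) (tb : LinearOrder C)
    (V : I → LinearOrder C) : C :=
  @Finset.max' C tb (Finset.univ.filter fun x => ∀ y, sck k V y ≤ sck k V x)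
    (by
      obtain ⟨b, -, hb⟩ := Finset.exists_max_image Finset.univ (sck k V)
        ⟨Classical.arbitrary C, Finset.mem_univ _⟩
      exact ⟨b, Finset.mem_filter.mpr ⟨Finset.mem_univ _, fun y => hb y (Finset.mem_univ y)⟩⟩)

/-- `v'` is a manipulative vote of voter `i` at the profile `V`. -/
def manip [Fintype C] [Nonempty C] [Fintype I] [DecidableEq I] (k : ℕ) (tb : LinearOrder C)
    (V : I → LinearOrder C) (i : I) (v' : LinearOrder C) : Prop :=
  (V i).lt (winner k tb V) (winner k tb (Function.update V i v'))

/-- `v'` is a level-1 strategy of voter `i` at the profile `V`: the outcome it produces is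
strictly preferred (w.r.t. `i`'s sincere vote) to every other feasible outcome. -/
def level1 [Fintype C] [Nonempty C] [Fintype I] [DecidableEq I] (k : ℕ) (tb : LinearOrder C)
    (V : I → LinearOrder C) (i : I) (v' : LinearOrder C) : Prop :=
  ∀ u : LinearOrder C,
    winner k tb (Function.update V i u) ≠ winner k tb (Function.update V i v') →
    (V i).lt (winner k tb (Function.update V i u)) (winner k tb (Function.update V i v'))

/-- `v` is a minimal manipulative vote of voter `i` at `V`. -/
def minimalManip [Fintype C] [Nonempty C] [Fintype I] [DecidableEq I] (k : ℕ)
    (tb : LinearOrder C) (V : I → LinearOrder C) (i : I) (v : LinearOrder C) : Prop :=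
  manip k tb V i v ∧ ∀ v', manip k tb V i v' →
    ((topk k (V i)) \ (topk k v)).card ≤ ((topk k (V i)) \ (topk k v')).card


/-- `topk` is an upper set of the vote `v`. -/
lemma topk_upper [Fintype C] {k : ℕ} {v : LinearOrder C} {w p : C} (h : v.lt w p)
    (hw : w ∈ topk k v) : p ∈ topk k v := by
  simp only [topk, Finset.mem_filter, Finset.mem_univ, true_and] at *
  refine lt_of_le_of_lt (Finset.card_le_card ?_) hw
  intro d hd
  simp only [Finset.mem_filter, Finset.mem_univ, true_and] at *
  exact @lt_trans C (@PartialOrder.toPreorder C (@LinearOrder.toPartialOrder C v)) _ _ _ h hd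

lemma winner_mem [Fintype C] [Nonempty C] [Fintype I] (k : ℕ) (tb : LinearOrder C)
    (V : I → LinearOrder C) :
    winner k tb V ∈ Finset.univ.filter fun x => ∀ y, sck k V y ≤ sck k V x :=
  @Finset.max'_mem C tb _ _

lemma score_le_winner [Fintype C] [Nonempty C] [Fintype I] (k : ℕ) (tb : LinearOrder C)
    (V : I → LinearOrder C) (y : C) : sck k V y ≤ sck k V (winner k tb V) :=
  (Finset.mem_filter.mp (winner_mem k tb V)).2 y

lemma tb_lt_winner [Fintype C] [Nonempty C] [Fintype I] (k : ℕ) (tb : LinearOrder C)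
    (V : I → LinearOrder C) (y : C) (hy : y ≠ winner k tb V)
    (h : sck k V (winner k tb V) ≤ sck k V y) : tb.lt y (winner k tb V) := by
  have hmem : y ∈ Finset.univ.filter fun x => ∀ z, sck k V z ≤ sck k V x :=
    Finset.mem_filter.mpr ⟨Finset.mem_univ _, fun z => le_trans (score_le_winner k tb V z) h⟩
  have hle : tb.le y (winner k tb V) := @Finset.le_max' C tb _ y hmem
  exact @lt_of_le_of_ne C tb.toPartialOrder _ _ hle hy

lemma sck_update [Fintype C] [Fintype I] [DecidableEq I] (k : ℕ) (V : I → LinearOrder C)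
    (i : I) (v' : LinearOrder C) (c : C) :
    sck k (Function.update V i v') c + (if c ∈ topk k (V i) then 1 else 0)
      = sck k V c + (if c ∈ topk k v' then 1 else 0) := by
  have hsck : ∀ (W : I → LinearOrder C), sck k W c
      = ∑ j, if c ∈ topk k (W j) then 1 else 0 := by
    intro W
    unfold sck
    rw [← Finset.card_filter]
    congr
  rw [hsck, hsck]
  rw [← Finset.sum_erase_add _ _ (Finset.mem_univ i), ← Finset.sum_erase_add _ _ (Finset.mem_univ i)]
  have hsum : ∑ j ∈ Finset.univ.erase i,
      (if c ∈ topk k (Function.update V i v' j) then 1 else 0)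
      = ∑ j ∈ Finset.univ.erase i, (if c ∈ topk k (V j) then 1 else 0) :=
    Finset.sum_congr rfl fun j hj => by
      rw [Function.update_of_ne (Finset.ne_of_mem_erase hj)]
  rw [hsum, Function.update_self]
  omega

/-- one can only manipulate in favour of a `k`-competitive candidate,
i.e. a member of `S(V,k) = S₁(V,k) ∪ S₂(V,k)`. -/
theorem statement_4 {C I : Type*} [Fintype C] [Nonempty C] [Fintype I] [DecidableEq I]
    (k : ℕ) (hk : 1 ≤ k) (tb : LinearOrder C) (V : I → LinearOrder C)
    (i : I) (p : C) (v' : LinearOrder C)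
    (hman : manip k tb V i v')
    (hfav : winner k tb (Function.update V i v') = p) :
    (sck k V p = sck k V (winner k tb V) ∧ tb.lt p (winner k tb V)) ∨
    (sck k V p + 1 = sck k V (winner k tb V) ∧ tb.lt (winner k tb V) p) := by
  set w := winner k tb V with hw
  set V' := Function.update V i v' with hV'
  have hlt : (V i).lt w p := hfav ▸ hman
  have hpw : p ≠ w := fun h => @lt_irrefl C (@PartialOrder.toPreorder C (@LinearOrder.toPartialOrder C (V i))) p (h ▸ hlt)
  have hsle : sck k V p ≤ sck k V w := score_le_winner k tb V p
  by_cases hs : sck k V p = sck k V w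
  · exact Or.inl ⟨hs, tb_lt_winner k tb V p hpw hs.ge⟩
  · right
    have hst : sck k V p < sck k V w := lt_of_le_of_ne hsle hs
    have himp : w ∈ topk k (V i) → p ∈ topk k (V i) := topk_upper hlt
    have h1 := sck_update k V i v' p
    have h2 := sck_update k V i v' w
    have h3 : sck k V' w ≤ sck k V' p := hfav ▸ score_le_winner k tb V' w
    rw [← hV'] at h1 h2
    have hba : (if w ∈ topk k (V i) then (1 : ℕ) else 0)
        ≤ (if p ∈ topk k (V i) then 1 else 0) := by
      by_cases hb : w ∈ topk k (V i)
      · simp [hb, himp hb]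
      · simp [hb]
    have ha' : (if p ∈ topk k v' then (1 : ℕ) else 0) ≤ 1 := by split_ifs <;> omega
    have hb' : (if w ∈ topk k v' then (1 : ℕ) else 0) ≤ 1 := by split_ifs <;> omega
    refine ⟨by omega, ?_⟩
    have heq : sck k V' p ≤ sck k V' w := by omega
    have := tb_lt_winner k tb V' w (fun h => hpw (hfav ▸ h.symm)) (hfav ▸ le_antisymm heq h3 ▸ heq)
    exact hfav ▸ this

end Paper
end

section
/- Fix a profile V over C, let w = R_2(V) be the 2-approval winner at V, and let i be a voter with w ∈ top_2(v_i). If v' is any manipulative vote of voter i at V with respect to 2-approval, then R_2(V_{-i}, v') = top(v_i); moreover top_2(v_i) = {top(v_i), w}, top(v_i) ∈ top_2(v'), and w ∉ top_2(v'). -/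
open scoped Classical

namespace Paper

variable {C I : Type*}

/-!
When voter `i` replaces `v_i` by `v'`, a candidate's score drops by one if it leaves his top two,
rises by one if it enters it, and is unchanged otherwise. The old winner `w` lies in `top_2(v_i)`
and the new winner `w'` is ranked above it, so `w'` is the top of `v_i` and neither of them can
gain. If `w` stayed in `top_2(v')`, or `w'` were not in it, the score margin of `w'` over `w`
could therefore not grow. But it is `≤ 0` before the switch (`w` wins) and `≥ 0` after it
(`w'` wins), so both margins would vanish and the tie-break would have to prefer each of `w`,
`w'` to the other.
-/

section TopK

variable [Fintype C] (v : LinearOrder C)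

theorem mem_topk {k : ℕ} {c : C} :
    c ∈ topk k v ↔ (Finset.univ.filter fun d => v.lt c d).card < k := by
  simp [topk]

theorem card_filter_lt_lt_of_lt {c d : C} (h : v.lt c d) :
    (Finset.univ.filter fun e => v.lt d e).card < (Finset.univ.filter fun e => v.lt c e).card := by
  let _ := v
  refine Finset.card_lt_card ⟨fun e he => ?_, fun hsub => ?_⟩
  · simp only [Finset.mem_filter, Finset.mem_univ, true_and] at he ⊢
    exact h.trans he
  · exact absurd (hsub (by simpa using h)) (by simp)

theorem not_lt_top [Nonempty C] (d : C) : ¬ v.lt (top v) d := by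
  let _ := v
  exact not_lt.mpr (Finset.le_max' _ d (Finset.mem_univ d))

theorem eq_top_of_forall_not_lt [Nonempty C] {d : C} (h : ∀ e, ¬ v.lt d e) : d = top v := by
  let _ := v
  exact le_antisymm (Finset.le_max' _ d (Finset.mem_univ d)) (not_lt.mp (h _))

theorem top_mem_topk [Nonempty C] {k : ℕ} (hk : 0 < k) : top v ∈ topk k v := by
  simpa [mem_topk, not_lt_top] using hk

variable {v}

theorem eq_top_of_lt_of_mem_topk_two [Nonempty C] {c d : C} (hc : c ∈ topk 2 v)
    (h : v.lt c d) : d = top v := by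
  have hd := (card_filter_lt_lt_of_lt v h).trans_le (Nat.lt_succ_iff.mp ((mem_topk v).mp hc))
  refine eq_top_of_forall_not_lt v fun e he => ?_
  exact absurd hd (not_lt.mpr (Finset.card_pos.mpr ⟨e, by simpa using he⟩))

theorem topk_two_eq_pair [Nonempty C] [DecidableEq C] {w : C} (hw : w ∈ topk 2 v)
    (hw_top : w ≠ top v) : topk 2 v = {top v, w} := by
  let _ := v
  ext c
  simp only [Finset.mem_insert, Finset.mem_singleton]
  refine ⟨fun hc => ?_, ?_⟩
  · rcases lt_trichotomy c w with hcw | rfl | hwc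
    · exact absurd (eq_top_of_lt_of_mem_topk_two hc hcw) hw_top
    · exact Or.inr rfl
    · exact Or.inl (eq_top_of_lt_of_mem_topk_two hw hwc)
  · rintro (rfl | rfl)
    · exact top_mem_topk v two_pos
    · exact hw

end TopK

theorem sck_update_add [Fintype C] [Fintype I] [DecidableEq I] (k : ℕ) (V : I → LinearOrder C)
    (i : I) (u : LinearOrder C) (c : C) :
    sck k (Function.update V i u) c + (if c ∈ topk k (V i) then 1 else 0)
      = sck k V c + (if c ∈ topk k u then 1 else 0) := by
  simp only [sck, Finset.card_filter]
  rw [← Finset.add_sum_erase _ _ (Finset.mem_univ i), ← Finset.add_sum_erase _ _ (Finset.mem_univ i),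
    Finset.sum_congr rfl fun j hj => by rw [Function.update_of_ne (Finset.ne_of_mem_erase hj)],
    Function.update_self]
  grind

section Winner

variable [Fintype C] [Nonempty C] [Fintype I]

theorem sck_le_sck_winner (k : ℕ) (tb : LinearOrder C) (V : I → LinearOrder C) (y : C) :
    sck k V y ≤ sck k V (winner k tb V) := by
  unfold winner
  exact (Finset.mem_filter.mp
    (Finset.max'_mem (Finset.univ.filter fun x => ∀ y, sck k V y ≤ sck k V x) _)).2 y

theorem le_winner_of_forall_sck_le {k : ℕ} {tb : LinearOrder C} {V : I → LinearOrder C} {y : C}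
    (hy : ∀ z, sck k V z ≤ sck k V y) : tb.le y (winner k tb V) := by
  unfold winner
  exact Finset.le_max' _ _ (Finset.mem_filter.mpr ⟨Finset.mem_univ _, hy⟩)

theorem winner_eq_winner_of_margin_le {k : ℕ} {tb : LinearOrder C} {V V' : I → LinearOrder C}
    (h : sck k V' (winner k tb V') + sck k V (winner k tb V)
      ≤ sck k V (winner k tb V') + sck k V' (winner k tb V)) :
    winner k tb V = winner k tb V' := by
  have hV := sck_le_sck_winner k tb V (winner k tb V')
  have hV' := sck_le_sck_winner k tb V' (winner k tb V)
  refine tb.le_antisymm _ _ (le_winner_of_forall_sck_le fun z => ?_)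
    (le_winner_of_forall_sck_le fun z => ?_)
  · have := sck_le_sck_winner k tb V' z; omega
  · have := sck_le_sck_winner k tb V z; omega

end Winner

/-- any manipulative vote of a voter ranking the 2-approval winner in his
top two positions makes his top candidate the winner, demoting the old winner. -/
theorem statement_6 {C I : Type*} [Fintype C] [Nonempty C] [DecidableEq C]
    [Fintype I] [DecidableEq I]
    (tb : LinearOrder C) (V : I → LinearOrder C) (i : I)
    (hw : winner 2 tb V ∈ topk 2 (V i))
    (v' : LinearOrder C) (hman : manip 2 tb V i v') :
    winner 2 tb (Function.update V i v') = top (V i) ∧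
    topk 2 (V i) = {top (V i), winner 2 tb V} ∧
    top (V i) ∈ topk 2 v' ∧
    winner 2 tb V ∉ topk 2 v' := by
  set w := winner 2 tb V
  set w' := winner 2 tb (Function.update V i v')
  have hne : w ≠ w' := @ne_of_lt _ (V i).toPreorder _ _ hman
  have htop : w' = top (V i) := eq_top_of_lt_of_mem_topk_two hw hman
  have hw'_mem : w' ∈ topk 2 (V i) := htop ▸ top_mem_topk (V i) two_pos
  have hmargin : ¬ sck 2 (Function.update V i v') w' + sck 2 V w
      ≤ sck 2 V w' + sck 2 (Function.update V i v') w := fun h =>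
    hne (winner_eq_winner_of_margin_le h)
  have hw_gain := sck_update_add 2 V i v' w
  have hw'_gain := sck_update_add 2 V i v' w'
  rw [if_pos hw] at hw_gain
  rw [if_pos hw'_mem] at hw'_gain
  have hw_not : w ∉ topk 2 v' := fun h => hmargin <| by
    rw [if_pos h] at hw_gain
    split_ifs at hw'_gain <;> omega
  have hw'_mem' : w' ∈ topk 2 v' := by
    by_contra h
    rw [if_neg hw_not] at hw_gain
    rw [if_neg h] at hw'_gain
    omega
  exact ⟨htop, topk_two_eq_pair hw (htop ▸ hne), htop ▸ hw'_mem', hw_not⟩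

end Paper
end
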